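/- Let A = {α_1, …, α_n} ⊆ 𝔽_q with |A| = n, let 1 < k < n, and let θ ∈ 𝔽_q with θ ≠ 0. For any a ∈ 𝔽_q with a ≠ 0 and any f_{k,θ} ∈ S_{k,θ}, the vector u = (g(α_1), …, g(α_n)) ∈ 𝔽_q^n, where g(x) = a x^k + f_{k,θ}(x), is a deep hole of TRS_k(A, θ); that is, d(u, TRS_k(A, θ)) = n − k. -/

import Mathlib

/-! The codewords are the evaluations of the polynomials of degree at most `k` whose coefficients
satisfy `f_k = θ f_{k-1}`. Since `a X^k + p` violates this relation, its difference with any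
codeword is a nonzero polynomial of degree at most `k`, so it vanishes at no more than `k` of the
`α_j`. Conversely, subtracting a suitable multiple `c₀ ∏_{j ∈ s} (X - α_j)` from any polynomial of
degree at most `k` restores the relation as soon as `1 + θ ∑_{j ∈ s} α_j ≠ 0`; such a `k`-set `s`
exists because the sums over two `k`-subsets of a `(k+1)`-set differ by `α_i - α_j ≠ 0`. -/

open Polynomial Finset

/-- The set `S_{k,θ}` of twisted polynomials
`Σ_{i=0}^{k-2} f_i x^i + f_{k-1}(x^{k-1} + θ x^k)`. -/
def Sset (F : Type*) [Field F] (k : ℕ) (θ : F) : Set (Polynomial F) :=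
  {p | ∃ f : ℕ → F, p = (∑ i ∈ Finset.range (k - 1), Polynomial.C (f i) * Polynomial.X ^ i)
        + Polynomial.C (f (k - 1)) * (Polynomial.X ^ (k - 1) + Polynomial.C θ * Polynomial.X ^ k)}

/-- The twisted Reed–Solomon code `TRS_k(A, θ)` for the evaluation sequence `α`. -/
def TRS {F : Type*} [Field F] {n : ℕ} (α : Fin n → F) (k : ℕ) (θ : F) : Set (Fin n → F) :=
  {v | ∃ p ∈ Sset F k θ, v = fun j => p.eval (α j)}

/-- The (Hamming) error distance `d(u, C)` from a word `u` to a code `C`. -/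
noncomputable def distTo {F : Type*} [DecidableEq F] {n : ℕ} (u : Fin n → F)
    (C : Set (Fin n → F)) : ℕ :=
  sInf {d | ∃ c ∈ C, hammingDist u c = d}

/-- The covering radius `ρ(C) = max_u d(u, C)` of a code `C`. -/
noncomputable def covRad {F : Type*} [DecidableEq F] {n : ℕ} (C : Set (Fin n → F)) : ℕ :=
  sSup {d | ∃ u, distTo u C = d}

/-- `u` is a deep hole of `C` if `d(u, C) = ρ(C)`. -/
def IsDeepHole {F : Type*} [DecidableEq F] {n : ℕ} (C : Set (Fin n → F)) (u : Fin n → F) :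
    Prop :=
  distTo u C = covRad C

/-- The column vector `c_{r,θ}(a) = (1, a, …, a^{r-2}, a^{r-1} - θ a^r)ᵀ ∈ 𝔽_q^r`. -/
def crv (F : Type*) [Field F] (r : ℕ) (θ a : F) : Fin r → F :=
  fun i => if (i : ℕ) = r - 1 then a ^ (r - 1) - θ * a ^ r else a ^ (i : ℕ)

/-- The parity-check matrix `H` whose `j`-th column is `c_{r,θ}(α_j)`. -/
def Hmat {F : Type*} [Field F] {n : ℕ} (r : ℕ) (θ : F) (α : Fin n → F) :
    Matrix (Fin r) (Fin n) F :=
  Matrix.of fun i j => crv F r θ (α j) i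

theorem Finset.exists_subset_card_eq_sum_ne {ι M : Type*} [AddCancelCommMonoid M]
    {s : Finset ι} {f : ι → M} (hf : Set.InjOn f s) {k : ℕ} (hk0 : 0 < k) (hk : k < #s) (b : M) :
    ∃ t ⊆ s, #t = k ∧ ∑ i ∈ t, f i ≠ b := by
  classical
  obtain ⟨u, hus, hu⟩ := exists_subset_card_eq (show k + 1 ≤ #s from hk)
  obtain ⟨i, hi, j, hj, hij⟩ := one_lt_card.mp (show 1 < #u by omega)
  by_contra! hall
  have hsum (x) (hx : x ∈ u) : f x + b = ∑ y ∈ u, f y := by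
    rw [← hall (u.erase x) ((erase_subset x u).trans hus) (by rw [card_erase_of_mem hx]; omega),
      add_sum_erase u f hx]
  exact hij (hf (hus hi) (hus hj) (add_right_cancel ((hsum i hi).trans (hsum j hj).symm)))

theorem hammingNorm_le_of_forall_mem_eq_zero {ι β : Type*} [Fintype ι] [DecidableEq ι] [Zero β]
    [DecidableEq β] {x : ι → β} {s : Finset ι} (hx : ∀ i ∈ s, x i = 0) :
    hammingNorm x ≤ Fintype.card ι - #s := by
  rw [← card_compl]
  exact card_le_card fun i hi => mem_compl.mpr fun his => (mem_filter.mp hi).2 (hx i his)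

theorem distTo_eq_of_forall_le_of_exists_le {F : Type*} [DecidableEq F] {n : ℕ}
    {u : Fin n → F} {C : Set (Fin n → F)} {d : ℕ} (hlow : ∀ c ∈ C, d ≤ hammingDist u c)
    (hup : ∃ c ∈ C, hammingDist u c ≤ d) : distTo u C = d := by
  obtain ⟨c, hc, hcd⟩ := hup
  have hmem : d ∈ {d | ∃ c ∈ C, hammingDist u c = d} := ⟨c, hc, le_antisymm hcd (hlow c hc)⟩
  refine le_antisymm (Nat.sInf_le hmem) (le_csInf ⟨d, hmem⟩ ?_)
  rintro _ ⟨c, hc, rfl⟩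
  exact hlow c hc

section TRS

variable {F : Type*} [Field F] {n k : ℕ} {α : Fin n → F}

theorem mem_Sset_iff (hk : 1 ≤ k) (θ : F) (p : F[X]) :
    p ∈ Sset F k θ ↔ p.natDegree ≤ k ∧ p.coeff k = θ * p.coeff (k - 1) := by
  obtain ⟨m, rfl⟩ := Nat.exists_eq_add_of_le' hk
  simp only [Sset, Set.mem_ofPred_eq, Nat.add_sub_cancel]
  constructor
  · rintro ⟨f, rfl⟩
    constructor
    · compute_degree
      exact max_le (natDegree_sum_le_of_forall_le _ _ fun i hi =>
        (natDegree_C_mul_X_pow_le _ _).trans (by rw [mem_range] at hi; omega)) le_rfl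
    · simp [coeff_X_pow, mul_comm θ]
  · rintro ⟨hdeg, hcoeff⟩
    refine ⟨p.coeff, ?_⟩
    conv_lhs => rw [p.as_sum_range' (m + 2) (by omega)]
    simp only [Finset.sum_range_succ, hcoeff, ← C_mul_X_pow_eq_monomial, C_mul, pow_succ]
    ring

theorem hammingDist_eval_eq_hammingNorm_eval_sub [DecidableEq F] (α : Fin n → F) (p q : F[X]) :
    hammingDist (fun j => p.eval (α j)) (fun j => q.eval (α j)) =
      hammingNorm fun j => (p - q).eval (α j) := by
  simp only [hammingDist, hammingNorm, eval_sub, sub_ne_zero]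

theorem sub_natDegree_le_hammingNorm_eval [DecidableEq F] (hα : Function.Injective α) {p : F[X]}
    (hp : p ≠ 0) : n - p.natDegree ≤ hammingNorm fun j => p.eval (α j) := by
  have hroots : #{j | p.eval (α j) = 0} ≤ p.natDegree := by
    rw [← card_image_of_injective _ hα]
    refine card_le_degree_of_subset_roots fun x hx => ?_
    obtain ⟨j, hj, rfl⟩ := mem_image.mp (mem_val.mp hx)
    exact (mem_roots hp).mpr (mem_filter.mp hj).2
  have hsplit := card_filter_add_card_filter_not (s := (univ : Finset (Fin n)))
    (fun j => p.eval (α j) = 0)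
  rw [card_univ, Fintype.card_fin] at hsplit
  change n - p.natDegree ≤ #{j | ¬p.eval (α j) = 0}
  omega

theorem sub_le_hammingDist_of_mem_TRS [DecidableEq F] (hα : Function.Injective α) (hk : 1 ≤ k)
    {θ : F} {g : F[X]} (hg : g.natDegree ≤ k) (hgS : g ∉ Sset F k θ) {c : Fin n → F}
    (hc : c ∈ TRS α k θ) : n - k ≤ hammingDist (fun j => g.eval (α j)) c := by
  obtain ⟨q, hq, rfl⟩ := hc
  have hdeg : (g - q).natDegree ≤ k :=
    (natDegree_sub_le _ _).trans (max_le hg ((mem_Sset_iff hk θ q).mp hq).1)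
  calc n - k ≤ n - (g - q).natDegree := Nat.sub_le_sub_left hdeg n
    _ ≤ _ := sub_natDegree_le_hammingNorm_eval hα (sub_ne_zero.mpr fun h => hgS (h ▸ hq))
    _ = _ := (hammingDist_eval_eq_hammingNorm_eval_sub α g q).symm

theorem exists_card_eq_one_add_mul_sum_ne_zero (hα : Function.Injective α) (hk0 : 0 < k)
    (hkn : k < n) (θ : F) : ∃ s : Finset (Fin n), #s = k ∧ 1 + θ * ∑ j ∈ s, α j ≠ 0 := by
  obtain ⟨s, -, hs, hsum⟩ :=
    exists_subset_card_eq_sum_ne (s := univ) hα.injOn hk0 (by simpa using hkn) (-θ⁻¹)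
  refine ⟨s, hs, fun h => ?_⟩
  rcases eq_or_ne θ 0 with rfl | hθ
  · simp at h
  · exact hsum (by field_simp; linear_combination h)

theorem exists_mem_TRS_hammingDist_le [DecidableEq F] (hα : Function.Injective α) (hk : 1 ≤ k)
    (hkn : k < n) (θ : F) {g : F[X]} (hg : g.natDegree ≤ k) :
    ∃ c ∈ TRS α k θ, hammingDist (fun j => g.eval (α j)) c ≤ n - k := by
  obtain ⟨s, hs, hσ⟩ := exists_card_eq_one_add_mul_sum_ne_zero hα hk hkn θ
  set P := ∏ j ∈ s, (X - C (α j))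
  set c₀ := (g.coeff k - θ * g.coeff (k - 1)) / (1 + θ * ∑ j ∈ s, α j)
  have hPdeg : P.natDegree = k := by simp [P, hs]
  have hPk : P.coeff k = 1 := hPdeg ▸ (monic_prod_X_sub_C _ _).coeff_natDegree
  have hPk1 : P.coeff (k - 1) = -∑ j ∈ s, α j := hs ▸ prod_X_sub_C_coeff_card_pred s α (by omega)
  have hmem : g - C c₀ * P ∈ Sset F k θ := by
    refine (mem_Sset_iff hk θ _).mpr
      ⟨(natDegree_sub_le _ _).trans (max_le hg ((natDegree_C_mul_le _ _).trans hPdeg.le)), ?_⟩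
    simp only [coeff_sub, coeff_C_mul, hPk, hPk1, c₀]
    field_simp
    ring
  refine ⟨_, ⟨_, hmem, rfl⟩, ?_⟩
  rw [hammingDist_eval_eq_hammingNorm_eval_sub, sub_sub_cancel]
  refine (hammingNorm_le_of_forall_mem_eq_zero fun j hj => ?_).trans_eq
    (by rw [Fintype.card_fin, hs])
  simp [P, eval_prod, prod_eq_zero hj]

end TRS

theorem standard_deep_holes_general {F : Type*} [Field F] [DecidableEq F]
    (n k : ℕ) (hk1 : 1 < k) (hkn : k < n) (α : Fin n → F) (hα : Function.Injective α)
    (θ : F) (a : F) (ha : a ≠ 0) (p : Polynomial F) (hp : p ∈ Sset F k θ) :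
    distTo (fun j => (Polynomial.C a * Polynomial.X ^ k + p).eval (α j)) (TRS α k θ)
      = n - k := by
  have hk : 1 ≤ k := hk1.le
  obtain ⟨hpdeg, hpcoeff⟩ := (mem_Sset_iff hk θ p).mp hp
  have hdeg : (C a * X ^ k + p).natDegree ≤ k :=
    natDegree_add_le_of_degree_le (natDegree_C_mul_X_pow_le a k) hpdeg
  have hnotMem : C a * X ^ k + p ∉ Sset F k θ := by
    rw [mem_Sset_iff hk, not_and]
    intro _ h
    exact ha (by simpa [coeff_X_pow, hpcoeff, show k - 1 ≠ k by omega] using h)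
  exact distTo_eq_of_forall_le_of_exists_le
    (fun c hc => sub_le_hammingDist_of_mem_TRS hα hk hdeg hnotMem hc)
    (exists_mem_TRS_hammingDist_le hα hk hkn θ hdeg)

/-- For `a ≠ 0` and `f_{k,θ} ∈ S_{k,θ}`, the word
`u = (g(α_1), …, g(α_n))` with `g(x) = a x^k + f_{k,θ}(x)` is a deep hole of
`TRS_k(A, θ)`, i.e. `d(u, TRS_k(A, θ)) = n - k`. -/
theorem standard_deep_holes {F : Type*} [Field F] [Fintype F] [DecidableEq F]
    (n k : ℕ) (hk1 : 1 < k) (hkn : k < n) (α : Fin n → F) (hα : Function.Injective α)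
    (θ : F) (hθ : θ ≠ 0) (a : F) (ha : a ≠ 0) (p : Polynomial F) (hp : p ∈ Sset F k θ) :
    distTo (fun j => (Polynomial.C a * Polynomial.X ^ k + p).eval (α j)) (TRS α k θ)
      = n - k :=
  standard_deep_holes_general n k hk1 hkn α hα θ a ha p hp
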